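/- Let p ≥ 1711 be a prime with −1 a quadratic residue and 2, 3 non-residues mod p, and let R' = R \ {(p+3)/2, (p−3)/2} where R is the set of quadratic residues mod p. Consider the digraph D on vertex set R' with edges: (x,y) and (x,z) for every triple x,y,z ∈ R' with 2x = y + z ≠ 3; and (1,y),(1,z) whenever y + z = 3 with y ≠ z in R'. Then D is strongly connected. -/

import Mathlib

/-- `a` is a (nonzero) quadratic residue in `ZMod p`. -/
def IsQR (p : ℕ) (a : ZMod p) : Prop := a ≠ 0 ∧ IsSquare a

/-- `R' = R \ {(p+3)/2, (p-3)/2}`: the quadratic residues with two elements removed. -/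
def Rp' (p : ℕ) : Set (ZMod p) :=
  {a | IsQR p a ∧ a ≠ (((p + 3) / 2 : ℕ) : ZMod p) ∧ a ≠ (((p - 3) / 2 : ℕ) : ZMod p)}

/-- The edge relation of the digraph `D` on `R'`: every triple `x, y, z ∈ R'` with
`2x = y + z ≠ 3` contributes edges `(x,y)` and `(x,z)`, and every `y ≠ z` in `R'`
with `y + z = 3` contributes edges `(1,y)` and `(1,z)`. -/
def DEdge (p : ℕ) (x y : ZMod p) : Prop :=
  x ∈ Rp' p ∧ y ∈ Rp' p ∧
    ((∃ z ∈ Rp' p, 2 * x = y + z ∧ y + z ≠ 3) ∨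
      (x = 1 ∧ ∃ z ∈ Rp' p, y ≠ z ∧ y + z = 3))

/-! An edge `x → y` is present as soon as `y` and `2x - y` lie in `R'` (then `2x ≠ 3`, because
`3/2 = (p+3)/2 ∉ R'`). For `a, b ∈ R'` we find a path `a → m → n → b`. The sets
`A = {m | m, 2a - m ∈ R'}` and `B = {n | n, 2n - b ∈ R'}` have about `p/4` elements each, by the
Jacobi-sum evaluation `∑ₓ χ(x - s) χ(x - t) = -1` for `s ≠ t`. If `2m - n` were never in `R'` for
`(m, n) ∈ A × B`, the character sum `∑_{A × B} χ(2m - n)` would be close to `-|A| |B|`, while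
Cauchy–Schwarz and the same evaluation bound its square by `|A| |B| p`. -/

open Finset

section QuadraticCharSums

variable {F : Type*} [Field F] [Fintype F]

lemma sum_comp_mul_add {M : Type*} [AddCommMonoid M] {u : F} (hu : u ≠ 0) (v : F) (f : F → M) :
    ∑ x, f (u * x + v) = ∑ x, f x :=
  ((Equiv.mulLeft₀ u hu).trans (Equiv.addRight v)).sum_comp f

variable [DecidableEq F]

local notation "χ" => quadraticChar F

lemma quadraticChar_sum_mul_add (hF : ringChar F ≠ 2) {u : F} (hu : u ≠ 0) (v : F) :
    ∑ x, χ (u * x + v) = 0 := by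
  rw [sum_comp_mul_add hu v (fun y => χ y), quadraticChar_sum_zero hF]

lemma quadraticChar_sum_mul_self :
    ∑ x, χ x * χ x = (Fintype.card F : ℤ) - 1 := by
  rw [← sum_erase_add _ _ (mem_univ 0), quadraticChar_zero, mul_zero, add_zero,
    sum_congr rfl fun x hx => by rw [← sq, quadraticChar_sq_one (ne_of_mem_erase hx)]]
  simp [Nat.cast_sub Fintype.card_pos]

lemma quadraticChar_sum_sub_mul_sub (hF : ringChar F ≠ 2) (s t : F) :
    ∑ x, χ (x - s) * χ (x - t) = if s = t then (Fintype.card F : ℤ) - 1 else -1 := by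
  split_ifs with hst
  · subst hst
    rw [← quadraticChar_sum_mul_self]
    exact (Equiv.subRight s).sum_comp fun y => χ y * χ y
  · have hJ : ∑ y, χ y * χ (1 - y) = -χ (-1) := by
      have := jacobiSum_nontrivial_inv (quadraticChar_ne_one hF)
      rwa [(quadraticChar_isQuadratic F).inv] at this
    have hd : -(s - t) ≠ 0 := neg_ne_zero.mpr (sub_ne_zero.mpr hst)
    -- substitute `x = s - (s - t) * y`, which turns the sum into the Jacobi sum `J(χ, χ)`
    rw [← sum_comp_mul_add hd s]
    calc ∑ y, χ (-(s - t) * y + s - s) * χ (-(s - t) * y + s - t)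
        = ∑ y, χ (-1) * χ (s - t) ^ 2 * (χ y * χ (1 - y)) := by
          refine sum_congr rfl fun y _ => ?_
          rw [show -(s - t) * y + s - s = -1 * (s - t) * y by ring,
            show -(s - t) * y + s - t = (s - t) * (1 - y) by ring]
          simp only [map_mul]
          ring
      _ = -1 := by
          rw [← mul_sum, hJ, quadraticChar_sq_one (sub_ne_zero.mpr hst), mul_one, mul_neg,
            ← sq, quadraticChar_sq_one (neg_ne_zero.mpr one_ne_zero)]

lemma card_le_four_mul_card_filter_quadraticChar (hF : ringChar F ≠ 2) {u v : F} (hu : u ≠ 0)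
    (hv : v ≠ 0) :
    (Fintype.card F : ℤ) ≤ 4 * #{x | χ x = 1 ∧ χ (u * x + v) = 1} + 5 := by
  have hshift : ∀ x, χ (u * x + v) = χ u * χ (x - -(v / u)) := fun x => by
    rw [← map_mul]; congr 1; field_simp; ring
  have hcorr : ∑ x, χ x * χ (u * x + v) = -χ u := by
    have := quadraticChar_sum_sub_mul_sub hF 0 (-(v / u))
    rw [if_neg (by simp [hu, hv])] at this
    simp only [sub_zero] at this
    simp only [hshift, mul_left_comm (χ _) (χ u), ← mul_sum, this, mul_neg_one]
  have hsum : ∑ x, (1 + χ x) * (1 + χ (u * x + v)) = Fintype.card F - χ u := by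
    simp only [add_mul, one_mul, mul_add, mul_one, sum_add_distrib, quadraticChar_sum_zero hF,
      quadraticChar_sum_mul_add hF hu, hcorr]
    simp only [sum_const, card_univ, nsmul_eq_mul, mul_one]
    ring
  have hpoint : ∀ x, (1 + χ x) * (1 + χ (u * x + v)) ≤
      4 * (if χ x = 1 ∧ χ (u * x + v) = 1 then 1 else 0) + (if χ x = 0 then 2 else 0) +
        (if χ (u * x + v) = 0 then 2 else 0) := fun x => by
    rcases quadraticChar_isQuadratic F x with h | h | h <;>
      rcases quadraticChar_isQuadratic F (u * x + v) with h' | h' | h' <;> simp [h, h']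
  have hzeros : ∑ x, (if χ x = 0 then (2 : ℤ) else 0) = 2 := by
    simp only [quadraticChar_eq_zero_iff, sum_ite_eq', mem_univ, if_true]
  have hu1 : χ u ≤ 1 := by
    rcases quadraticChar_isQuadratic F u with h | h | h <;> simp [h]
  calc (Fintype.card F : ℤ) ≤ ∑ x, (1 + χ x) * (1 + χ (u * x + v)) + 1 := by linarith
    _ ≤ ∑ x, (4 * (if χ x = 1 ∧ χ (u * x + v) = 1 then 1 else 0) +
          (if χ x = 0 then 2 else 0) + (if χ (u * x + v) = 0 then 2 else 0)) + 1 := by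
        gcongr with x; exact hpoint x
    _ = 4 * #{x | χ x = 1 ∧ χ (u * x + v) = 1} + 5 := by
        rw [sum_add_distrib, sum_add_distrib, ← mul_sum, sum_boole,
          sum_comp_mul_add hu v (fun y => if χ y = 0 then (2 : ℤ) else 0), hzeros]
        ring

lemma card_le_four_mul_card_filter_mem (hF : ringChar F ≠ 2) {S : Set F} [DecidablePred (· ∈ S)]
    {E : Finset F} (hSE : ∀ x, χ x = 1 → x ∈ S ∨ x ∈ E) {u v : F} (hu : u ≠ 0) (hv : v ≠ 0) :
    (Fintype.card F : ℤ) ≤ 4 * #{x | x ∈ S ∧ u * x + v ∈ S} + 8 * #E + 5 := by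
  have hsub : ({x | χ x = 1 ∧ χ (u * x + v) = 1} : Finset F) ⊆
      ({x | x ∈ S ∧ u * x + v ∈ S} : Finset F) ∪ (E ∪ E.image fun y => u⁻¹ * (y - v)) := by
    intro x hx
    simp only [mem_filter, mem_univ, true_and, mem_union, mem_image] at hx ⊢
    rcases hSE x hx.1 with h1 | h1
    · rcases hSE _ hx.2 with h2 | h2
      · exact Or.inl ⟨h1, h2⟩
      · exact Or.inr (Or.inr ⟨_, h2, by field_simp; ring⟩)
    · exact Or.inr (Or.inl h1)
  have hcard := (card_le_card hsub).trans <| (card_union_le _ _).trans <|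
    Nat.add_le_add_left ((card_union_le _ _).trans (Nat.add_le_add_left card_image_le _)) _
  have := card_le_four_mul_card_filter_quadraticChar hF hu hv
  have := (Nat.cast_le (α := ℤ)).mpr hcard
  push_cast at this
  linarith

lemma sum_quadraticChar_le_of_forall_notMem {S : Set F} {E : Finset F}
    (hSE : ∀ x, χ x = 1 → x ∈ S ∨ x ∈ E) {T : Finset F} (hT : ∀ y ∈ T, y ∉ S) :
    ∑ y ∈ T, χ y ≤ 2 * #E + 1 - #T := by
  have hpoint : ∀ y ∈ T, χ y ≤ -1 + (if y = 0 then 1 else 0) + 2 * (if y ∈ E then 1 else 0) := by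
    intro y hy
    rcases quadraticChar_isQuadratic F y with h | h | h
    · rw [h, quadraticChar_eq_zero_iff.mp h, if_pos rfl]; split_ifs <;> norm_num
    · rw [h, if_pos ((hSE y h).resolve_left (hT y hy))]; split_ifs <;> norm_num
    · rw [h]; split_ifs <;> norm_num
  have hzero : ∑ y ∈ T, (if y = 0 then (1 : ℤ) else 0) ≤ 1 := by
    rw [sum_ite_eq']; split_ifs <;> norm_num
  have hE : #(T ∩ E) ≤ #E := card_le_card inter_subset_right
  calc ∑ y ∈ T, χ y ≤ ∑ y ∈ T, (-1 + (if y = 0 then 1 else 0) + 2 * (if y ∈ E then 1 else 0)) :=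
        sum_le_sum hpoint
    _ = -#T + ∑ y ∈ T, (if y = 0 then 1 else 0) + 2 * #(T ∩ E) := by
        rw [sum_add_distrib, sum_add_distrib, ← mul_sum, sum_boole]; simp
    _ ≤ 2 * #E + 1 - #T := by linarith [(Nat.cast_le (α := ℤ)).mpr hE]

lemma sq_sum_sum_quadraticChar_le (hF : ringChar F ≠ 2) {u : F} (hu : u ≠ 0) (A B : Finset F) :
    (∑ m ∈ A, ∑ n ∈ B, χ (u * m - n)) ^ 2 ≤ #A * #B * Fintype.card F := by
  have hcorr : ∀ n ∈ B, ∑ n' ∈ B, ∑ m, χ (u * m - n) * χ (u * m - n') ≤ Fintype.card F := by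
    intro n hn
    calc ∑ n' ∈ B, ∑ m, χ (u * m - n) * χ (u * m - n')
        = ∑ n' ∈ B, (if n = n' then (Fintype.card F : ℤ) - 1 else -1) := by
          refine sum_congr rfl fun n' _ => ?_
          rw [← quadraticChar_sum_sub_mul_sub hF n n']
          simpa only [add_zero] using sum_comp_mul_add hu 0 fun x => χ (x - n) * χ (x - n')
      _ ≤ ∑ n' ∈ B, (if n = n' then (Fintype.card F : ℤ) else 0) := by
          gcongr with n'; split_ifs <;> linarith
      _ = Fintype.card F := by rw [sum_ite_eq, if_pos hn]
  calc (∑ m ∈ A, ∑ n ∈ B, χ (u * m - n)) ^ 2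
      ≤ #A * ∑ m ∈ A, (∑ n ∈ B, χ (u * m - n)) ^ 2 :=
        sq_sum_le_card_mul_sum_sq (s := A) (f := fun m => ∑ n ∈ B, χ (u * m - n))
    _ ≤ #A * ∑ m : F, (∑ n ∈ B, χ (u * m - n)) ^ 2 := by
        gcongr
        exact subset_univ A
    _ = #A * ∑ n ∈ B, ∑ n' ∈ B, ∑ m : F, χ (u * m - n) * χ (u * m - n') := by
        simp only [sq, sum_mul_sum]
        rw [sum_comm]
        exact congrArg _ (sum_congr rfl fun n _ => sum_comm)
    _ ≤ #A * ∑ n ∈ B, (Fintype.card F : ℤ) := by gcongr with n hn; exact hcorr n hn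
    _ = #A * #B * Fintype.card F := by rw [sum_const, nsmul_eq_mul, mul_assoc]

lemma exists_mul_sub_mem (hF : ringChar F ≠ 2) (hq : 100 ≤ Fintype.card F) {S : Set F}
    {E : Finset F} (hE : #E ≤ 2) (hSE : ∀ x, χ x = 1 → x ∈ S ∨ x ∈ E) {u : F} (hu : u ≠ 0)
    {A B : Finset F} (hA : (Fintype.card F : ℤ) ≤ 4 * #A + 8 * #E + 5)
    (hB : (Fintype.card F : ℤ) ≤ 4 * #B + 8 * #E + 5) :
    ∃ m ∈ A, ∃ n ∈ B, u * m - n ∈ S := by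
  by_contra! hnone
  have hE' : (#E : ℤ) ≤ 2 := by exact_mod_cast hE
  have hneg : ∑ m ∈ A, ∑ n ∈ B, χ (u * m - n) ≤ ∑ m ∈ A, (5 - #B : ℤ) := by
    refine sum_le_sum fun m hm => ?_
    have hinj : Function.Injective (u * m - ·) := sub_right_injective
    have := sum_quadraticChar_le_of_forall_notMem hSE (T := B.image (u * m - ·))
      (by simpa using hnone m hm)
    rw [sum_image hinj.injOn, card_image_of_injective _ hinj] at this
    linarith
  rw [sum_const, nsmul_eq_mul] at hneg
  have hsq := sq_sum_sum_quadraticChar_le hF hu A B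
  have hq' : (100 : ℤ) ≤ Fintype.card F := by exact_mod_cast hq
  set q : ℤ := ((Fintype.card F : ℕ) : ℤ)
  set α : ℤ := ((#A : ℕ) : ℤ)
  set β : ℤ := ((#B : ℕ) : ℤ)
  have hαβ : α * (β - 5) ≤ -∑ m ∈ A, ∑ n ∈ B, χ (u * m - n) := by linarith
  have hsq' : (α * (β - 5)) ^ 2 ≤ α * β * q := by
    have hα : 0 ≤ α := by positivity
    calc (α * (β - 5)) ^ 2 ≤ (-∑ m ∈ A, ∑ n ∈ B, χ (u * m - n)) ^ 2 :=
          pow_le_pow_left₀ (mul_nonneg hα (by linarith)) hαβ 2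
      _ ≤ α * β * q := by rwa [neg_sq]
  have hcube : α * (β - 10) ≤ q := by nlinarith
  nlinarith

lemma exists_midpoint_chain (hF : ringChar F ≠ 2) (hq : 100 ≤ Fintype.card F) {S : Set F}
    [DecidablePred (· ∈ S)] {E : Finset F} (hE : #E ≤ 2) (hSE : ∀ x, χ x = 1 → x ∈ S ∨ x ∈ E)
    (hS0 : 0 ∉ S) {a b : F} (ha : a ∈ S) (hb : b ∈ S) :
    ∃ m n, (m ∈ S ∧ 2 * a - m ∈ S) ∧ (n ∈ S ∧ 2 * n - b ∈ S) ∧ 2 * m - n ∈ S := by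
  have h2 : (2 : F) ≠ 0 := Ring.two_ne_zero hF
  have hA := card_le_four_mul_card_filter_mem hF hSE (neg_ne_zero.mpr one_ne_zero)
    (mul_ne_zero h2 (ne_of_mem_of_not_mem ha hS0))
  have hB := card_le_four_mul_card_filter_mem hF hSE h2
    (neg_ne_zero.mpr (ne_of_mem_of_not_mem hb hS0))
  simp only [neg_one_mul, neg_add_eq_sub, ← sub_eq_add_neg] at hA hB
  obtain ⟨m, hm, n, hn, hmn⟩ := exists_mul_sub_mem hF hq hE hSE h2 hA hB
  simp only [mem_filter, mem_univ, true_and] at hm hn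
  exact ⟨m, n, hm, hn, hmn⟩

end QuadraticCharSums

section ZMod

variable {p : ℕ} [Fact p.Prime]

lemma isQR_iff_quadraticChar_eq_one {a : ZMod p} :
    IsQR p a ↔ quadraticChar (ZMod p) a = 1 := by
  refine ⟨fun h => (quadraticChar_one_iff_isSquare h.1).mpr h.2, fun h => ?_⟩
  have ha : a ≠ 0 := by rintro rfl; simp at h
  exact ⟨ha, (quadraticChar_one_iff_isSquare ha).mp h⟩

lemma mem_Rp'_or_mem_of_quadraticChar_eq_one {x : ZMod p} (hx : quadraticChar (ZMod p) x = 1) :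
    x ∈ Rp' p ∨
      x ∈ ({(((p + 3) / 2 : ℕ) : ZMod p), (((p - 3) / 2 : ℕ) : ZMod p)} : Finset (ZMod p)) := by
  simp only [Rp', Set.mem_ofPred_eq, isQR_iff_quadraticChar_eq_one.mpr hx, true_and, mem_insert,
    mem_singleton]
  tauto

lemma two_mul_ne_three_of_mem_Rp' (hp : p ≠ 2) {x : ZMod p} (hx : x ∈ Rp' p) : 2 * x ≠ 3 := by
  have hodd : Odd p := (Fact.out : p.Prime).odd_of_ne_two hp
  have h2 : (2 : ZMod p) ≠ 0 := Ring.two_ne_zero (by rwa [ZMod.ringChar_zmod_n])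
  have hhalf : 2 * ((p + 3) / 2) = p + 3 :=
    Nat.mul_div_cancel' ((even_iff_two_dvd).mp (hodd.add_odd (by decide)))
  have hcast := congrArg (Nat.cast : ℕ → ZMod p) hhalf
  push_cast at hcast
  rw [ZMod.natCast_self, zero_add] at hcast
  exact fun h => hx.2.1 (mul_left_cancel₀ h2 (h.trans hcast.symm))

lemma dEdge_of_mem (hp : p ≠ 2) {x y : ZMod p} (hx : x ∈ Rp' p) (hy : y ∈ Rp' p)
    (hxy : 2 * x - y ∈ Rp' p) : DEdge p x y :=
  ⟨hx, hy, Or.inl ⟨2 * x - y, hxy, by ring, by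
    rw [add_sub_cancel]; exact two_mul_ne_three_of_mem_Rp' hp hx⟩⟩

end ZMod

theorem stmt_15_general (p : ℕ) [Fact p.Prime] (hp : 1711 ≤ p) :
    ∀ a ∈ Rp' p, ∀ b ∈ Rp' p, Relation.ReflTransGen (DEdge p) a b := by
  classical
  intro a ha b hb
  have hp2 : p ≠ 2 := by omega
  have hF : ringChar (ZMod p) ≠ 2 := by rwa [ZMod.ringChar_zmod_n]
  obtain ⟨m, n, ⟨hm, ham⟩, ⟨hn, hnb⟩, hmn⟩ :=
    exists_midpoint_chain hF (by rw [ZMod.card]; omega) card_le_two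
      (fun _ hx => mem_Rp'_or_mem_of_quadraticChar_eq_one hx) (fun h => h.1.1 rfl) ha hb
  exact .tail (.tail (.single (dEdge_of_mem hp2 ha hm ham)) (dEdge_of_mem hp2 hm hn hmn))
    (dEdge_of_mem hp2 hn hb hnb)

theorem stmt_15 (p : ℕ) [Fact p.Prime] (hp : 1711 ≤ p)
    (h1 : IsQR p (-1)) (h2 : ¬ IsQR p 2) (h3 : ¬ IsQR p 3) :
    ∀ a ∈ Rp' p, ∀ b ∈ Rp' p, Relation.ReflTransGen (DEdge p) a b :=
  stmt_15_general p hp
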